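/- Let x be a formula. (a) If PathSat_fr(x), then SAT_fr(x). (b) If PathSat_rp(x), then SAT_cn(x). (c) If PathSat_mem(x), then SAT_st(x). Consequently, SAT_rp(x) ⇔ SAT_cn(x) and SAT_mem(x) ⇔ SAT_st(x). -/

import Mathlib

/-!
Each path-to-algebra implication is witnessed by a valuation algebra that replays a satisfying
path `P`. In general a valuation is simply the rest of `P`. For a repetition-proof `P` a valuation
is the rest of `P` together with a memory of the last value read for every atom, and deriving `a`
skips the whole run of `a`s at the front of the path: this makes the algebra contractive, and it
still replays `P` because the atoms of a run all carry the same value. A memorizing `P` defines a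
single assignment of the atoms, that is, a static algebra.

Conversely, the atoms read while evaluating `x` at `H`, with their values, form a path on which
`se x` yields `x/H`, and it is repetition-proof (memorizing) when the algebra is. Hence
`SAT_rp ⟹ PathSat_rp ⟹ SAT_cn ⟹ SAT_rp`, and likewise for memorizing and static algebras.
-/

/-- Formulas over a set of atoms `A`: x ::= T | a | ¬x | x ∧ y. -/
inductive Fm (A : Type) : Type where
  | tru : Fm A
  | atom : A → Fm A
  | neg : Fm A → Fm A
  | con : Fm A → Fm A → Fm A

/-- Trees over `A`: X ::= T | F | X ⊴ a ⊵ X. -/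
inductive Tr (A : Type) : Type where
  | tt : Tr A
  | ff : Tr A
  | node : Tr A → A → Tr A → Tr A

namespace Tr

/-- The substitution X[T ↦ Y, F ↦ Z]. -/
def subst {A : Type} : Tr A → Tr A → Tr A → Tr A
  | tt, Y, _ => Y
  | ff, _, Z => Z
  | node l a r, Y, Z => node (subst l Y Z) a (subst r Y Z)

/-- All leaves of the tree are T. -/
def closedT {A : Type} : Tr A → Prop
  | tt => True
  | ff => False
  | node l _ r => closedT l ∧ closedT r

/-- All leaves of the tree are F. -/
def closedF {A : Type} : Tr A → Prop
  | tt => False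
  | ff => True
  | node l _ r => closedF l ∧ closedF r

/-- A tree is open if it is neither closed by T nor closed by F. -/
def IsOpen {A : Type} (X : Tr A) : Prop := ¬ closedT X ∧ ¬ closedF X

/-- The tree has at least one T leaf. -/
def hasT {A : Type} : Tr A → Prop
  | tt => True
  | ff => False
  | node l _ r => hasT l ∨ hasT r

/-- The tree has at least one F leaf. -/
def hasF {A : Type} : Tr A → Prop
  | tt => False
  | ff => True
  | node l _ r => hasF l ∨ hasF r

end Tr

/-- A formula is constant-free if it contains no occurrence of T. -/
def Fm.constFree {A : Type} : Fm A → Prop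
  | .tru => False
  | .atom _ => True
  | .neg x => x.constFree
  | .con x y => x.constFree ∧ y.constFree

/-- The short-circuit evaluation tree of a formula. -/
def se {A : Type} : Fm A → Tr A
  | .tru => .tt
  | .atom a => .node .tt a .ff
  | .neg x => (se x).subst .ff .tt
  | .con x y => (se x).subst (se y) .ff

/-- A valuation algebra: a nonempty set of valuations together with an
evaluation `/ : 𝒜 × V → Bool` and a derivative `• : 𝒜 × V → V`. -/
structure ValAlg (A : Type) : Type 1 where
  V : Type
  nonempty : Nonempty V
  eval : A → V → Bool
  deriv : A → V → V

namespace ValAlg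

variable {A : Type}

/-- Simultaneous extension of evaluation and derivative to formulas:
`ev u x H = (x/H, x•H)`. -/
def ev (u : ValAlg A) : Fm A → u.V → Bool × u.V
  | .tru, H => (true, H)
  | .atom a, H => (u.eval a H, u.deriv a H)
  | .neg x, H => ((u.ev x H).1.not, (u.ev x H).2)
  | .con x y, H => if (u.ev x H).1 then u.ev y (u.ev x H).2 else (false, (u.ev x H).2)

/-- The evaluation `x/H` of a formula. -/
def fEval (u : ValAlg A) (x : Fm A) (H : u.V) : Bool := (u.ev x H).1

/-- The derivative `x•H` of a formula. -/
def fDeriv (u : ValAlg A) (x : Fm A) (H : u.V) : u.V := (u.ev x H).2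

/-- Repetition-proof valuation algebra: a/(a•H) = a/H. -/
def RepProof (u : ValAlg A) : Prop :=
  ∀ a H, u.eval a (u.deriv a H) = u.eval a H

/-- Contractive: repetition-proof and a•a•H = a•H. -/
def Contractive (u : ValAlg A) : Prop :=
  u.RepProof ∧ ∀ a H, u.deriv a (u.deriv a H) = u.deriv a H

/-- Memorizing: contractive and a/(b•a•H) = a/H, a•b•a•H = b•a•H. -/
def Memorizing (u : ValAlg A) : Prop :=
  u.Contractive ∧
    (∀ a b H, u.eval a (u.deriv b (u.deriv a H)) = u.eval a H) ∧
    (∀ a b H, u.deriv a (u.deriv b (u.deriv a H)) = u.deriv b (u.deriv a H))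

/-- Static: memorizing and a/(b•H) = a/H. -/
def Static (u : ValAlg A) : Prop :=
  u.Memorizing ∧ ∀ a b H, u.eval a (u.deriv b H) = u.eval a H

end ValAlg

/-- Valuation congruence with respect to a valuation algebra. -/
def VCongr {A : Type} (u : ValAlg A) (x y : Fm A) : Prop :=
  ∀ H : u.V, u.fEval x H = u.fEval y H ∧ u.fDeriv x H = u.fDeriv y H

/-- Satisfiability w.r.t. all valuation algebras. -/
def SATfr {A : Type} (x : Fm A) : Prop :=
  ∃ u : ValAlg A, ∃ H : u.V, u.fEval x H = true

/-- Satisfiability w.r.t. repetition-proof valuation algebras. -/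
def SATrp {A : Type} (x : Fm A) : Prop :=
  ∃ u : ValAlg A, u.RepProof ∧ ∃ H : u.V, u.fEval x H = true

/-- Satisfiability w.r.t. contractive valuation algebras. -/
def SATcn {A : Type} (x : Fm A) : Prop :=
  ∃ u : ValAlg A, u.Contractive ∧ ∃ H : u.V, u.fEval x H = true

/-- Satisfiability w.r.t. memorizing valuation algebras. -/
def SATmem {A : Type} (x : Fm A) : Prop :=
  ∃ u : ValAlg A, u.Memorizing ∧ ∃ H : u.V, u.fEval x H = true

/-- Satisfiability w.r.t. static valuation algebras. -/
def SATst {A : Type} (x : Fm A) : Prop :=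
  ∃ u : ValAlg A, u.Static ∧ ∃ H : u.V, u.fEval x H = true

/-- A valuation path: a finite sequence of pairs in 𝒜 × {T, F}. -/
abbrev VPath (A : Type) := List (A × Bool)

/-- The (partial) result `P : X` of a valuation path on a tree. -/
def result {A : Type} [DecidableEq A] : VPath A → Tr A → Option Bool
  | [], .tt => some true
  | [], .ff => some false
  | (u, b) :: Q, .node X₁ a X₂ =>
      if u = a then (if b then result Q X₁ else result Q X₂) else none
  | _ :: _, .tt => none
  | _ :: _, .ff => none
  | [], .node _ _ _ => none

/-- A path is repetition-proof if equal adjacent atoms carry equal values. -/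
def RepProofPath {A : Type} : VPath A → Prop
  | (u, b) :: (v, c) :: t => (u = v → b = c) ∧ RepProofPath ((v, c) :: t)
  | _ => True

/-- A path is memorizing if equal atoms anywhere carry equal values. -/
def MemPath {A : Type} (P : VPath A) : Prop :=
  ∀ u b c, (u, b) ∈ P → (u, c) ∈ P → b = c

/-- Free path-satisfiability. -/
def PathSatFr {A : Type} [DecidableEq A] (x : Fm A) : Prop :=
  ∃ P : VPath A, result P (se x) = some true

/-- Rp-path-satisfiability. -/
def PathSatRp {A : Type} [DecidableEq A] (x : Fm A) : Prop :=
  ∃ P : VPath A, RepProofPath P ∧ result P (se x) = some true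

/-- Mem-path-satisfiability. -/
def PathSatMem {A : Type} [DecidableEq A] (x : Fm A) : Prop :=
  ∃ P : VPath A, MemPath P ∧ result P (se x) = some true

/-- Free path-falsifiability. -/
def PathFalFr {A : Type} [DecidableEq A] (x : Fm A) : Prop :=
  ∃ P : VPath A, result P (se x) = some false

/-- The evaluation path `x ⋄ H`. -/
def ValAlg.epath {A : Type} (u : ValAlg A) : Fm A → u.V → VPath A
  | .tru, _ => []
  | .atom a, H => [(a, u.eval a H)]
  | .neg x, H => u.epath x H
  | .con x y, H =>
      if u.fEval x H then u.epath x H ++ u.epath y (u.fDeriv x H) else u.epath x H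

/-- `lastIdx a P k` is the largest 1-based index `i ≤ min k |P|` with `uᵢ = a`,
or 0 if no such index exists. -/
def lastIdx {A : Type} [DecidableEq A] (a : A) (P : VPath A) : ℕ → ℕ
  | 0 => 0
  | k + 1 => if (P[k]?).map Prod.fst = some a then k + 1 else lastIdx a P k

/-- The norm-based constructor `va`; the valuation `i : Fin (|P| + 1)`
represents the 1-based valuation `i + 1` of the paper. -/
def va {A : Type} [DecidableEq A] (P : VPath A) : ValAlg A where
  V := Fin (P.length + 1)
  nonempty := ⟨0⟩
  eval a i :=
    match lastIdx a P (i.1 + 1) with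
    | 0 => false
    | j + 1 => ((P[j]?).map Prod.snd).getD false
  deriv a i :=
    if h : i.1 < P.length ∧ (P[i.1]?).map Prod.fst = some a
    then ⟨i.1 + 1, by omega⟩ else i

/-- Helper for contraction: `cnAux a Q` drops leading repetitions of `a`. -/
def cnAux {A : Type} [DecidableEq A] : A → VPath A → VPath A
  | _, [] => []
  | a, (u, b) :: Q => if u = a then cnAux a Q else (u, b) :: cnAux u Q

/-- The contraction of a valuation path. -/
def cn {A : Type} [DecidableEq A] : VPath A → VPath A
  | [] => []
  | (u, b) :: Q => (u, b) :: cnAux u Q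

/-- The norm-based constructor `sva`, a trivial valuation algebra. -/
def sva {A : Type} [DecidableEq A] (P : VPath A) : ValAlg A where
  V := PUnit
  nonempty := ⟨PUnit.unit⟩
  eval a _ := decide ((a, true) ∈ P)
  deriv _ H := H

section Result

variable {A : Type} [DecidableEq A]

@[simp]
lemma result_tt {P : VPath A} {r : Bool} : result P .tt = some r ↔ P = [] ∧ r = true := by
  rcases P with _ | ⟨⟨u, b⟩, Q⟩ <;> simp [result, Eq.comm (a := true)]

@[simp]
lemma result_ff {P : VPath A} {r : Bool} : result P .ff = some r ↔ P = [] ∧ r = false := by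
  rcases P with _ | ⟨⟨u, b⟩, Q⟩ <;> simp [result, Eq.comm (a := false)]

@[simp]
lemma result_nil_node {X₁ X₂ : Tr A} {a : A} : result [] (.node X₁ a X₂) = none := rfl

@[simp]
lemma result_cons_node {X₁ X₂ : Tr A} {a u : A} {b : Bool} {Q : VPath A} :
    result ((u, b) :: Q) (.node X₁ a X₂) =
      if u = a then result Q (if b then X₁ else X₂) else none := by
  cases b <;> rfl

lemma result_subst {X Y Z : Tr A} {P : VPath A} {r : Bool} :
    result P (X.subst Y Z) = some r ↔
      ∃ P₁ P₂ b, P = P₁ ++ P₂ ∧ result P₁ X = some b ∧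
        result P₂ (if b then Y else Z) = some r := by
  induction X generalizing P with
  | tt => simp [Tr.subst]
  | ff => simp [Tr.subst]
  | node X₁ a X₂ ih₁ ih₂ =>
    constructor
    · rcases P with _ | ⟨⟨u, c⟩, Q⟩
      · simp [Tr.subst]
      · intro h
        simp only [Tr.subst, result_cons_node] at h
        split_ifs at h with hu hc <;> subst hu
        · obtain ⟨P₁, P₂, b, rfl, h₁, h₂⟩ := ih₁.1 h
          exact ⟨(u, c) :: P₁, P₂, b, rfl, by simp [hc, h₁], h₂⟩
        · obtain ⟨P₁, P₂, b, rfl, h₁, h₂⟩ := ih₂.1 h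
          exact ⟨(u, c) :: P₁, P₂, b, rfl, by simp [hc, h₁], h₂⟩
    · rintro ⟨_ | ⟨⟨u, c⟩, P₁⟩, P₂, b, rfl, h₁, h₂⟩
      · simp at h₁
      · simp only [result_cons_node] at h₁
        split_ifs at h₁ with hu hc <;> subst hu
        · simpa [Tr.subst, hc] using ih₁.2 ⟨P₁, P₂, b, rfl, h₁, h₂⟩
        · simpa [Tr.subst, hc] using ih₂.2 ⟨P₁, P₂, b, rfl, h₁, h₂⟩

variable {P : VPath A} {r : Bool}

lemma result_se_atom {a : A} : result P (se (.atom a)) = some r ↔ P = [(a, r)] := by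
  rcases P with _ | ⟨⟨u, b⟩, Q⟩
  · simp [se]
  · cases b <;> cases r <;> simp [se, and_comm]

lemma result_se_neg {x : Fm A} : result P (se (.neg x)) = some r ↔ result P (se x) = some !r := by
  simp only [se, result_subst]
  constructor
  · rintro ⟨P₁, P₂, b, rfl, h₁, h₂⟩
    cases b <;> simp_all
  · intro h
    exact ⟨P, [], !r, by simp, h, by cases r <;> simp⟩

lemma result_se_con {x y : Fm A} :
    result P (se (.con x y)) = some r ↔
      (∃ P₁ P₂, P = P₁ ++ P₂ ∧ result P₁ (se x) = some true ∧ result P₂ (se y) = some r) ∨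
        result P (se x) = some false ∧ r = false := by
  simp only [se, result_subst]
  constructor
  · rintro ⟨P₁, P₂, b, rfl, h₁, h₂⟩
    cases b
    · simp_all
    · exact .inl ⟨P₁, P₂, rfl, h₁, h₂⟩
  · rintro (⟨P₁, P₂, rfl, h₁, h₂⟩ | ⟨h, rfl⟩)
    · exact ⟨P₁, P₂, true, rfl, h₁, h₂⟩
    · exact ⟨P, [], false, by simp, h, by simp⟩

end Result

namespace ValAlg

variable {A : Type}

def IsPathSimulation (u : ValAlg A) (R : u.V → VPath A → Prop) : Prop :=
  ∀ a r H Q, R H ((a, r) :: Q) → u.eval a H = r ∧ R (u.deriv a H) Q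

variable [DecidableEq A] {u : ValAlg A} {R : u.V → VPath A → Prop}

theorem IsPathSimulation.exists_ev_eq (hR : u.IsPathSimulation R) (x : Fm A)
    {P Q : VPath A} {r : Bool} {H : u.V} (hx : result P (se x) = some r) (hH : R H (P ++ Q)) :
    ∃ H', u.ev x H = (r, H') ∧ R H' Q := by
  induction x generalizing P Q r H with
  | tru =>
    obtain ⟨rfl, rfl⟩ : P = [] ∧ r = true := by simpa [se] using hx
    exact ⟨H, rfl, hH⟩
  | atom a =>
    obtain rfl := result_se_atom.1 hx
    obtain ⟨he, hd⟩ := hR a r H Q hH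
    exact ⟨_, by rw [ev, he], hd⟩
  | neg x ih =>
    obtain ⟨H', he, hH'⟩ := ih (result_se_neg.1 hx) hH
    exact ⟨H', by simp [ev, he], hH'⟩
  | con x y ihx ihy =>
    rcases result_se_con.1 hx with ⟨P₁, P₂, rfl, h₁, h₂⟩ | ⟨h₁, rfl⟩
    · obtain ⟨H₁, he₁, hH₁⟩ := ihx h₁ (by rwa [List.append_assoc] at hH)
      obtain ⟨H₂, he₂, hH₂⟩ := ihy h₂ hH₁
      exact ⟨H₂, by simp [ev, he₁, he₂], hH₂⟩
    · obtain ⟨H₁, he₁, hH₁⟩ := ihx h₁ hH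
      exact ⟨H₁, by simp [ev, he₁], hH₁⟩

theorem IsPathSimulation.fEval_eq_true (hR : u.IsPathSimulation R) {x : Fm A} {P : VPath A}
    {H : u.V} (hx : result P (se x) = some true) (hH : R H P) : u.fEval x H = true := by
  obtain ⟨H', he, -⟩ := hR.exists_ev_eq x hx (Q := []) (by rwa [List.append_nil])
  simp [fEval, he]

end ValAlg

section Algebras

variable {A : Type} [DecidableEq A]

def pathAlg (A : Type) [DecidableEq A] : ValAlg A where
  V := VPath A
  nonempty := ⟨[]⟩
  eval a H := decide (H.head? = some (a, true))
  deriv _ H := H.tail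

lemma pathAlg_isPathSimulation : (pathAlg A).IsPathSimulation (· = ·) := by
  rintro a r H Q rfl
  cases r <;> simp [pathAlg]

theorem PathSatFr.satFr {x : Fm A} (h : PathSatFr x) : SATfr x := by
  obtain ⟨P, hP⟩ := h
  exact ⟨pathAlg A, P, pathAlg_isPathSimulation.fEval_eq_true hP rfl⟩

lemma sva_static (P : VPath A) : (sva P).Static :=
  ⟨⟨⟨fun _ _ => rfl, fun _ _ => rfl⟩, fun _ _ _ => rfl, fun _ _ _ => rfl⟩, fun _ _ _ => rfl⟩

lemma sva_isPathSimulation {P : VPath A} (hP : MemPath P) :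
    (sva P).IsPathSimulation (fun _ L => L ⊆ P) := by
  intro a r H Q hQ
  refine ⟨?_, (List.cons_subset.1 hQ).2⟩
  have ha : (a, r) ∈ P := hQ List.mem_cons_self
  cases r
  · simpa [sva] using fun h => hP a true false h ha
  · simpa [sva] using ha

theorem PathSatMem.satSt {x : Fm A} (h : PathSatMem x) : SATst x := by
  obtain ⟨P, hP, hx⟩ := h
  exact ⟨sva P, sva_static P, ⟨⟩, (sva_isPathSimulation hP).fEval_eq_true hx (List.Subset.refl P)⟩

end Algebras

section Contractive

variable {A : Type}

lemma RepProofPath.tail {p : A × Bool} {L : VPath A} (h : RepProofPath (p :: L)) :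
    RepProofPath L := by
  rcases L with _ | ⟨q, L⟩
  · trivial
  · exact h.2

variable [DecidableEq A]

lemma RepProofPath.snd_eq_of_mem_takeWhile {a : A} {r : Bool} {Q : VPath A}
    (h : RepProofPath ((a, r) :: Q)) {p : A × Bool} (hp : p ∈ Q.takeWhile (·.1 = a)) :
    p.2 = r := by
  induction Q with
  | nil => simp at hp
  | cons q Q ih =>
    obtain ⟨v, c⟩ := q
    by_cases hv : v = a
    · subst hv
      obtain rfl : c = r := (h.1 rfl).symm
      simp only [List.takeWhile_cons, decide_true, if_true, List.mem_cons] at hp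
      exact hp.elim (fun hp => by rw [hp]) (ih h.2)
    · simp [hv] at hp

def contrEval (a : A) (H : (A → Bool) × VPath A) : Bool :=
  match H.2 with
  | (v, c) :: _ => if v = a then c else H.1 a
  | [] => H.1 a

def contrDeriv (a : A) (H : (A → Bool) × VPath A) : (A → Bool) × VPath A :=
  (Function.update H.1 a (contrEval a H), H.2.dropWhile (·.1 = a))

def contrAlg (A : Type) [DecidableEq A] : ValAlg A where
  V := (A → Bool) × VPath A
  nonempty := ⟨(fun _ => false, [])⟩
  eval := contrEval
  deriv := contrDeriv

lemma contrEval_cons_self (a : A) (r : Bool) (f : A → Bool) (Q : VPath A) :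
    contrEval a (f, (a, r) :: Q) = r := by
  simp [contrEval]

lemma contrEval_dropWhile (a : A) (f : A → Bool) (S : VPath A) :
    contrEval a (f, S.dropWhile (·.1 = a)) = f a := by
  induction S with
  | nil => rfl
  | cons q S ih =>
    obtain ⟨v, c⟩ := q
    by_cases hv : v = a
    · simpa [hv] using ih
    · simp [contrEval, hv]

lemma contrEval_contrDeriv (a : A) (H : (A → Bool) × VPath A) :
    contrEval a (contrDeriv a H) = contrEval a H := by
  simp [contrDeriv, contrEval_dropWhile]

lemma contrDeriv_contrDeriv (a : A) (H : (A → Bool) × VPath A) :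
    contrDeriv a (contrDeriv a H) = contrDeriv a H := by
  rw [contrDeriv, contrEval_contrDeriv]
  simp [contrDeriv, List.dropWhile_idempotent]

lemma contrAlg_contractive : (contrAlg A).Contractive :=
  ⟨contrEval_contrDeriv, contrDeriv_contrDeriv⟩

def ContrFollows (H : (A → Bool) × VPath A) (L : VPath A) : Prop :=
  RepProofPath L ∧
    (H.2 = L ∨ ∃ a, H.2 = L.dropWhile (·.1 = a) ∧ ∀ p ∈ L.takeWhile (·.1 = a), p.2 = H.1 a)

lemma contrAlg_isPathSimulation : (contrAlg A).IsPathSimulation ContrFollows := by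
  rintro a r ⟨f, S⟩ Q ⟨hrp, hS⟩
  show contrEval a (f, S) = r ∧ ContrFollows (contrDeriv a (f, S)) Q
  have fresh :
      S = (a, r) :: Q → contrEval a (f, S) = r ∧ ContrFollows (contrDeriv a (f, S)) Q := by
    rintro rfl
    refine ⟨contrEval_cons_self a r f Q, hrp.tail, .inr ⟨a, by simp [contrDeriv], ?_⟩⟩
    intro p hp
    simpa [contrDeriv, contrEval_cons_self] using hrp.snd_eq_of_mem_takeWhile hp
  rcases hS with hS | ⟨b, hS, hrun⟩
  · exact fresh hS
  by_cases hb : b = a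
  · subst hb
    simp only [List.dropWhile_cons, decide_true, if_true] at hS
    have hr : r = f b := hrun (b, r) (by simp)
    have hfix : contrDeriv b (f, S) = (f, S) := by
      simp [contrDeriv, hS, contrEval_dropWhile, List.dropWhile_idempotent]
    rw [hfix]
    exact ⟨by simp [hS, contrEval_dropWhile, hr], hrp.tail,
      .inr ⟨b, hS, fun p hp => hrun p (by simp [hp])⟩⟩
  · exact fresh (by simpa [List.dropWhile_cons, Ne.symm hb] using hS)

theorem PathSatRp.satCn {x : Fm A} (h : PathSatRp x) : SATcn x := by
  obtain ⟨P, hP, hx⟩ := h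
  exact ⟨contrAlg A, contrAlg_contractive, (fun _ => false, P),
    contrAlg_isPathSimulation.fEval_eq_true hx ⟨hP, .inl rfl⟩⟩

end Contractive

namespace ValAlg

variable {A : Type} {u : ValAlg A}

lemma fEval_neg (x : Fm A) (H : u.V) : u.fEval (.neg x) H = !u.fEval x H := rfl

lemma fEval_con (x y : Fm A) (H : u.V) :
    u.fEval (.con x y) H = if u.fEval x H then u.fEval y (u.fDeriv x H) else false := by
  by_cases hx : u.fEval x H <;> simp_all [fEval, fDeriv, ev]

lemma fDeriv_con (x y : Fm A) (H : u.V) :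
    u.fDeriv (.con x y) H = if u.fEval x H then u.fDeriv y (u.fDeriv x H) else u.fDeriv x H := by
  by_cases hx : u.fEval x H <;> simp_all [fEval, fDeriv, ev]

inductive Trace (u : ValAlg A) : VPath A → u.V → u.V → Prop
  | nil (H : u.V) : Trace u [] H H
  | cons (a : A) {H K : u.V} {P : VPath A} :
      Trace u P (u.deriv a H) K → Trace u ((a, u.eval a H) :: P) H K

lemma Trace.append {P Q : VPath A} {H K L : u.V} (h₁ : u.Trace P H K) (h₂ : u.Trace Q K L) :
    u.Trace (P ++ Q) H L := by
  induction h₁ with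
  | nil => exact h₂
  | cons a _ ih => exact .cons a (ih h₂)

lemma trace_epath (x : Fm A) (H : u.V) : u.Trace (u.epath x H) H (u.fDeriv x H) := by
  induction x generalizing H with
  | tru => exact .nil H
  | atom a => exact .cons a (.nil _)
  | neg x ih => exact ih H
  | con x y ihx ihy =>
    by_cases hx : u.fEval x H
    · simpa [epath, fDeriv_con, hx] using (ihx H).append (ihy _)
    · simpa [epath, fDeriv_con, hx] using ihx H

lemma Trace.repProofPath (hu : u.RepProof) {P : VPath A} {H K : u.V} (h : u.Trace P H K) :
    RepProofPath P := by
  induction h with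
  | nil => trivial
  | cons a h ih =>
    cases h with
    | nil => trivial
    | cons b _ => exact ⟨fun hab => hab ▸ (hu a _).symm, ih⟩

/-- `u.deriv a H = H` holds once `a` has been read; from then on memorization freezes the value
of `a`. -/
lemma Trace.eval_eq_of_mem (hu : u.Memorizing) {P : VPath A} {H K : u.V} (h : u.Trace P H K)
    {a : A} (ha : u.deriv a H = H) {c : Bool} (hc : (a, c) ∈ P) : c = u.eval a H := by
  induction h with
  | nil => simp at hc
  | @cons d H K P h ih =>
    rcases List.mem_cons.1 hc with hc | hc
    · simp only [Prod.mk.injEq] at hc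
      obtain ⟨rfl, rfl⟩ := hc
      rfl
    · have hd := hu.2.2 a d H
      have he := hu.2.1 a d H
      rw [ha] at hd he
      rw [ih hd hc, he]

lemma Trace.memPath (hu : u.Memorizing) {P : VPath A} {H K : u.V} (h : u.Trace P H K) :
    MemPath P := by
  induction h with
  | nil => simp [MemPath]
  | @cons d H K P h ih =>
    have hd : ∀ c, (d, c) ∈ (d, u.eval d H) :: P → c = u.eval d H := by
      intro c hc
      rcases List.mem_cons.1 hc with hc | hc
      · simp_all
      · rw [h.eval_eq_of_mem hu (hu.1.2 d H) hc, hu.1.1 d H]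
    intro a b c hb hc
    by_cases had : a = d
    · subst had
      rw [hd b hb, hd c hc]
    · simp only [List.mem_cons, Prod.mk.injEq, had, false_and, false_or] at hb hc
      exact ih a b c hb hc

variable [DecidableEq A]

lemma result_epath (x : Fm A) (H : u.V) : result (u.epath x H) (se x) = some (u.fEval x H) := by
  induction x generalizing H with
  | tru => rfl
  | atom a => exact result_se_atom.2 rfl
  | neg x ih => simpa [result_se_neg, epath, fEval_neg] using ih H
  | con x y ihx ihy =>
    apply result_se_con.2
    by_cases hx : u.fEval x H
    · exact .inl ⟨u.epath x H, u.epath y (u.fDeriv x H), by simp [epath, hx], hx ▸ ihx H,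
        by simpa [fEval_con, hx] using ihy _⟩
    · simp only [Bool.not_eq_true] at hx
      exact .inr ⟨by simpa [epath, hx] using ihx H, by simp [fEval_con, hx]⟩

end ValAlg

section Satisfiability

variable {A : Type} {x : Fm A}

theorem SATcn.satRp (h : SATcn x) : SATrp x :=
  let ⟨u, hu, H, hx⟩ := h
  ⟨u, hu.1, H, hx⟩

theorem SATst.satMem (h : SATst x) : SATmem x :=
  let ⟨u, hu, H, hx⟩ := h
  ⟨u, hu.1, H, hx⟩

variable [DecidableEq A]

theorem SATrp.pathSatRp (h : SATrp x) : PathSatRp x := by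
  obtain ⟨u, hu, H, hx⟩ := h
  exact ⟨u.epath x H, (ValAlg.trace_epath x H).repProofPath hu, hx ▸ ValAlg.result_epath x H⟩

theorem SATmem.pathSatMem (h : SATmem x) : PathSatMem x := by
  obtain ⟨u, hu, H, hx⟩ := h
  exact ⟨u.epath x H, (ValAlg.trace_epath x H).memPath hu, hx ▸ ValAlg.result_epath x H⟩

end Satisfiability

/-- PathSat_fr implies SAT_fr, PathSat_rp implies SAT_cn,
PathSat_mem implies SAT_st; consequently `SAT_rp ↔ SAT_cn` and
`SAT_mem ↔ SAT_st`. -/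
theorem stmt_19 {A : Type} [DecidableEq A] (x : Fm A) :
    (PathSatFr x → SATfr x) ∧ (PathSatRp x → SATcn x) ∧
    (PathSatMem x → SATst x) ∧ (SATrp x ↔ SATcn x) ∧ (SATmem x ↔ SATst x) :=
  ⟨PathSatFr.satFr, PathSatRp.satCn, PathSatMem.satSt,
    ⟨fun h => h.pathSatRp.satCn, SATcn.satRp⟩, ⟨fun h => h.pathSatMem.satSt, SATst.satMem⟩⟩
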